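/- For every n ≥ 2, the distinguishing stability of the friendship graph F_n equals the minimum k ≥ 1 such that 8(n − k) + 1 is a perfect square, i.e. st_D(F_n) = min{k ≥ 1 : 8(n − k) + 1 is a perfect square}. -/

import Mathlib

open SimpleGraph

/-- The distinguishing number of a graph: the least `d` such that there is a vertex
labeling with `d` labels preserved only by the trivial automorphism. -/
noncomputable def distNum {V : Type*} (G : SimpleGraph V) : ℕ :=
  sInf {d : ℕ | ∃ f : V → Fin d, ∀ φ : G ≃g G, (∀ x, f (φ x) = f x) → ∀ x, φ x = x}

/-- The distinguishing stability of a graph: the minimum cardinality of a proper subset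
`S` of the vertex set whose removal changes the distinguishing number. -/
noncomputable def stD {V : Type*} (G : SimpleGraph V) : ℕ :=
  sInf {k : ℕ | ∃ S : Set V, S ≠ Set.univ ∧ S.ncard = k ∧
    distNum (G.induce Sᶜ) ≠ distNum G}

/-- The distinguishing bondage number of a graph: the minimum cardinality of a set
of edges whose removal changes the distinguishing number. -/
noncomputable def bD {V : Type*} (G : SimpleGraph V) : ℕ :=
  sInf {k : ℕ | ∃ F : Set (Sym2 V), F ⊆ G.edgeSet ∧ F.ncard = k ∧
    distNum (G.deleteEdges F) ≠ distNum G}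

/-- The friendship graph $F_n$: $n$ triangles glued at a common central vertex `none`. -/
def friendshipGraph (n : ℕ) : SimpleGraph (Option (Fin n × Fin 2)) :=
  SimpleGraph.fromRel (fun u v => u = none ∨ ∃ i a b, u = some (i, a) ∧ v = some (i, b))

lemma distNum_le {V : Type*} (G : SimpleGraph V) {d : ℕ} (f : V → Fin d)
    (hf : ∀ φ : G ≃g G, (∀ x, f (φ x) = f x) → ∀ x, φ x = x) : distNum G ≤ d :=
  Nat.sInf_le ⟨f, hf⟩

lemma lt_distNum {V : Type*} [Finite V] (G : SimpleGraph V) {c : ℕ}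
    (h : ∀ f : V → Fin c, ∃ φ : G ≃g G, (∀ x, f (φ x) = f x) ∧ ∃ x, φ x ≠ x) :
    c < distNum G := by
  have hne : {d : ℕ | ∃ f : V → Fin d, ∀ φ : G ≃g G,
      (∀ x, f (φ x) = f x) → ∀ x, φ x = x}.Nonempty := by
    obtain ⟨m, ⟨e⟩⟩ := Finite.exists_equiv_fin V
    exact ⟨m, e, fun φ hφ x => e.injective (hφ x)⟩
  by_contra hc
  push_neg at hc
  have hmem := Nat.sInf_mem hne
  obtain ⟨f₀, hf₀⟩ := hmem
  obtain ⟨φ, hφ, x, hx⟩ := h (Fin.castLE hc ∘ f₀)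
  exact hx (hf₀ φ (fun y => Fin.castLE_injective hc (hφ y)) x)

lemma fg_adj_none_some (n : ℕ) (x : Fin n × Fin 2) :
    (friendshipGraph n).Adj none (some x) := by
  simp [friendshipGraph, SimpleGraph.fromRel_adj]

lemma fg_adj_some_some (n : ℕ) (i j : Fin n) (a b : Fin 2) :
    (friendshipGraph n).Adj (some (i,a)) (some (j,b)) ↔ i = j ∧ a ≠ b := by
  constructor
  · rintro ⟨hne, h | h⟩ <;> rcases h with h | ⟨i', a', b', h1, h2⟩ <;>
      simp_all <;> aesop
  · rintro ⟨rfl, hab⟩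
    exact ⟨by simp [hab], Or.inl (Or.inr ⟨i, a, b, rfl, rfl⟩)⟩

lemma fg_not_adj_some_none (n : ℕ) (x : Fin n × Fin 2) :
    ¬ (friendshipGraph n).Adj (some x) none ↔ False := by
  simp [(friendshipGraph n).adj_symm, fg_adj_none_some]

lemma fg_adj_some_none (n : ℕ) (x : Fin n × Fin 2) :
    (friendshipGraph n).Adj (some x) none :=
  (friendshipGraph n).adj_symm (fg_adj_none_some n x)

/-- wreath automorphisms of the friendship graph -/
def wreathAuto (n : ℕ) (π : Equiv.Perm (Fin n)) (τ : Fin n → Equiv.Perm (Fin 2)) :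
    friendshipGraph n ≃g friendshipGraph n where
  toEquiv := Equiv.optionCongr (Equiv.prodShear π τ)
  map_rel_iff' := by
    rintro (_ | ⟨i, a⟩) (_ | ⟨j, b⟩)
    · simp [(friendshipGraph n).irrefl]
    · simpa using Iff.intro (fun _ => fg_adj_none_some n _) (fun _ => fg_adj_none_some n _)
    · simpa using Iff.intro (fun _ => fg_adj_some_none n _) (fun _ => fg_adj_some_none n _)
    · simp only [Equiv.optionCongr_apply, Option.map_some, Equiv.prodShear_apply,
        fg_adj_some_some]
      constructor
      · rintro ⟨hij, hab⟩
        refine ⟨π.injective hij, fun h => hab ?_⟩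
        subst h; rw [show i = j from π.injective hij]
      · rintro ⟨rfl, hab⟩
        exact ⟨rfl, fun h => hab ((τ i).injective h)⟩

@[simp] lemma wreathAuto_none (n π τ) : wreathAuto n π τ none = none := rfl
@[simp] lemma wreathAuto_some (n π τ) (i : Fin n) (a : Fin 2) :
    wreathAuto n π τ (some (i,a)) = some (π i, τ i a) := rfl

/-- restricting an automorphism preserving a vertex set -/
def restrictAuto {V : Type*} {G : SimpleGraph V} (ψ : G ≃g G) (T : Set V)
    (h : ∀ v, v ∈ T ↔ ψ v ∈ T) : G.induce T ≃g G.induce T where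
  toEquiv := Equiv.subtypeEquiv ψ.toEquiv h
  map_rel_iff' := by
    intro a b
    exact ψ.map_adj_iff

@[simp] lemma restrictAuto_apply {V : Type*} {G : SimpleGraph V} (ψ : G ≃g G) (T : Set V)
    (h) (v : T) : (restrictAuto ψ T h v : V) = ψ v := rfl

/-- sorted pairs -/
def SortedPairs (c : ℕ) := {q : Fin c × Fin c // q.1 < q.2}

instance (c : ℕ) : Fintype (SortedPairs c) := by unfold SortedPairs; infer_instance

def sortedPairsEquiv (c : ℕ) : SortedPairs c ≃ Σ b : Fin c, Fin b.val where
  toFun q := ⟨q.1.2, ⟨q.1.1.val, q.2⟩⟩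
  invFun x := ⟨(⟨x.2.val, lt_trans x.2.isLt x.1.isLt⟩, x.1), x.2.isLt⟩
  left_inv q := rfl
  right_inv x := rfl

lemma card_sortedPairs (c : ℕ) : Fintype.card (SortedPairs c) = c.choose 2 := by
  rw [Fintype.card_congr (sortedPairsEquiv c), Fintype.card_sigma]
  simp only [Fintype.card_fin]
  rw [show (∑ x : Fin c, (x : ℕ)) = ∑ i ∈ Finset.range c, i from
    Fin.sum_univ_eq_sum_range (fun i => i) c, Finset.sum_range_id, Nat.choose_two_right]

/-- existence of an injective-on-a-finset map into a fintype -/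
lemma exists_injOn_finset {ι : Type*} [DecidableEq ι] (A : Finset ι) (β : Type*) [Fintype β]
    [Nonempty β] (h : A.card ≤ Fintype.card β) :
    ∃ g : ι → β, ∀ i ∈ A, ∀ j ∈ A, g i = g j → i = j := by
  have : Fintype.card A ≤ Fintype.card β := by simpa using h
  obtain ⟨e⟩ := Function.Embedding.nonempty_of_card_le this
  refine ⟨fun i => if h : i ∈ A then e ⟨i, h⟩ else Classical.arbitrary β, ?_⟩
  intro i hi j hj hij
  simp only [dif_pos hi, dif_pos hj] at hij
  exact Subtype.ext_iff.mp (e.injective hij)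

abbrev FG (n : ℕ) := friendshipGraph n

lemma subtype_val_eq {V : Type*} {T : Set V} {x y : T} (h : (x : V) = y) : x = y :=
  Subtype.ext h

lemma lower_core (n c : ℕ) (S : Set (Option (Fin n × Fin 2))) (A : Finset (Fin n))
    (hA : ∀ i ∈ A, some (i, (0:Fin 2)) ∉ S ∧ some (i, (1:Fin 2)) ∉ S)
    (hcard : c.choose 2 < A.card) :
    c < distNum ((friendshipGraph n).induce Sᶜ) := by
  classical
  apply lt_distNum
  intro f
  obtain ⟨w, hwval⟩ : ∃ w : {i // i ∈ A} → Fin 2 → (Sᶜ : Set _),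
      ∀ k b, (w k b : Option (Fin n × Fin 2)) = some (k.1, b) :=
    ⟨fun k b => ⟨some (k.1, b), by
      rcases (show b = 0 ∨ b = 1 by omega) with rfl | rfl
      exacts [(hA k.1 k.2).1, (hA k.1 k.2).2]⟩, fun k b => rfl⟩
  have hmemw : ∀ (k : {i // i ∈ A}) (b : Fin 2), some (k.1, b) ∈ Sᶜ :=
    fun k b => (hwval k b) ▸ (w k b).2
  have fval : ∀ (x y : (Sᶜ : Set _)), (x : Option (Fin n × Fin 2)) = y → f x = f y :=
    fun x y h => congrArg f (Subtype.ext h)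
  by_cases hsame : ∃ i : {i // i ∈ A}, f (w i 0) = f (w i 1)
  · obtain ⟨i, hi⟩ := hsame
    set ψ := wreathAuto n 1 (fun k => if k = i.1 then Equiv.swap 0 1 else 1) with hψ
    have hψval : ∀ b : Fin 2, ψ (some (i.1, b)) = some (i.1, Equiv.swap 0 1 b) := by
      intro b; simp [hψ]
    have hψfix : ∀ j b, j ≠ i.1 → ψ (some (j, b)) = some (j, b) := by
      intro j b hj; simp [hψ, hj]
    have hT : ∀ v, v ∈ Sᶜ ↔ ψ v ∈ Sᶜ := by
      rintro (_ | ⟨j, b⟩)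
      · simp [hψ]
      · by_cases hj : j = i.1
        · subst hj
          rw [hψval b]
          exact iff_of_true (hmemw i b) (hmemw i (Equiv.swap 0 1 b))
        · rw [hψfix j b hj]
    refine ⟨restrictAuto ψ Sᶜ hT, ?_, ?_⟩
    · rintro ⟨(_ | ⟨j, b⟩), hx⟩
      · exact fval _ _ (by simp [hψ])
      · by_cases hj : j = i.1
        · subst hj
          rcases (show b = 0 ∨ b = 1 by omega) with rfl | rfl
          · refine (fval _ (w i 1) ?_).trans (hi.symm.trans (fval (w i 0) _ (hwval i 0)))
            rw [restrictAuto_apply, hψval 0, hwval]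
            simp [Equiv.swap_apply_left]
          · refine (fval _ (w i 0) ?_).trans (hi.trans (fval (w i 1) _ (hwval i 1)))
            rw [restrictAuto_apply, hψval 1, hwval]
            simp [Equiv.swap_apply_right]
        · exact fval _ _ (by rw [restrictAuto_apply]; exact hψfix j b hj)
    · refine ⟨w i 0, fun h => ?_⟩
      have := congrArg Subtype.val h
      rw [restrictAuto_apply, hwval, hψval 0] at this
      simp at this
  · push_neg at hsame
    set P : {i // i ∈ A} → Finset (Fin c) := fun i => {f (w i 0), f (w i 1)} with hP
    have hmaps : ∀ i ∈ (Finset.univ : Finset {i // i ∈ A}),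
        P i ∈ Finset.powersetCard 2 (Finset.univ : Finset (Fin c)) := by
      intro i _
      rw [Finset.mem_powersetCard]
      exact ⟨Finset.subset_univ _, Finset.card_pair (hsame i)⟩
    have hlt : (Finset.powersetCard 2 (Finset.univ : Finset (Fin c))).card <
        (Finset.univ : Finset {i // i ∈ A}).card := by
      rw [Finset.card_powersetCard, Finset.card_univ, Finset.card_univ]
      simpa using hcard
    obtain ⟨i, -, j, -, hij, hPij⟩ :=
      Finset.exists_ne_map_eq_of_card_lt_of_maps_to hlt hmaps
    have hij' : i.1 ≠ j.1 := fun h => hij (Subtype.ext h)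
    have h00 : f (w i 0) = f (w j 0) ∨ f (w i 0) = f (w j 1) := by
      have : f (w i 0) ∈ P j := hPij ▸ Finset.mem_insert_self _ _
      simpa [hP] using this
    have h11 : f (w i 1) = f (w j 0) ∨ f (w i 1) = f (w j 1) := by
      have : f (w i 1) ∈ P j := hPij ▸ (by simp [hP])
      simpa [hP] using this
    set σ : Equiv.Perm (Fin 2) := if f (w i 0) = f (w j 0) then 1 else Equiv.swap 0 1 with hσ
    have hkey : (σ = 1 ∧ f (w i 0) = f (w j 0) ∧ f (w i 1) = f (w j 1)) ∨
        (σ = Equiv.swap 0 1 ∧ f (w i 0) = f (w j 1) ∧ f (w i 1) = f (w j 0)) := by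
      by_cases hc0 : f (w i 0) = f (w j 0)
      · refine Or.inl ⟨by rw [hσ, if_pos hc0], hc0, ?_⟩
        rcases h11 with h1 | h1
        · exact absurd (hc0.trans h1.symm) (hsame i)
        · exact h1
      · refine Or.inr ⟨by rw [hσ, if_neg hc0], ?_, ?_⟩
        · rcases h00 with h0 | h0
          exacts [absurd h0 hc0, h0]
        · rcases h11 with h1 | h1
          · exact h1
          · rcases h00 with h0 | h0
            exacts [absurd h0 hc0, absurd (h0.trans h1.symm) (hsame i)]
    have hmain : ∀ b : Fin 2, f (w j (σ b)) = f (w i b) ∧ f (w i (σ b)) = f (w j b) := by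
      intro b
      rcases hkey with ⟨hσ1, hA0, hA1⟩ | ⟨hσ1, hA0, hA1⟩ <;>
        rcases (show b = 0 ∨ b = 1 by omega) with rfl | rfl <;>
          rw [hσ1] <;> constructor
      · exact (fval _ (w j 0) rfl).trans hA0.symm
      · exact (fval _ (w i 0) rfl).trans hA0
      · exact (fval _ (w j 1) rfl).trans hA1.symm
      · exact (fval _ (w i 1) rfl).trans hA1
      · exact (fval _ (w j 1) (by rw [hwval, hwval]; simp [Equiv.swap_apply_left])).trans hA0.symm
      · exact (fval _ (w i 1) (by rw [hwval, hwval]; simp [Equiv.swap_apply_left])).trans hA1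
      · exact (fval _ (w j 0) (by rw [hwval, hwval]; simp [Equiv.swap_apply_right])).trans hA1.symm
      · exact (fval _ (w i 0) (by rw [hwval, hwval]; simp [Equiv.swap_apply_right])).trans hA0
    set ψ := wreathAuto n (Equiv.swap i.1 j.1) (fun k => if k = i.1 ∨ k = j.1 then σ else 1)
      with hψ
    have hψi : ∀ b : Fin 2, ψ (some (i.1, b)) = some (j.1, σ b) := by
      intro b; simp [hψ, Equiv.swap_apply_left]
    have hψj : ∀ b : Fin 2, ψ (some (j.1, b)) = some (i.1, σ b) := by
      intro b; simp [hψ, Equiv.swap_apply_right, hij'.symm]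
    have hψfix : ∀ k b, k ≠ i.1 → k ≠ j.1 → ψ (some (k, b)) = some (k, b) := by
      intro k b h1 h2; simp [hψ, Equiv.swap_apply_of_ne_of_ne h1 h2, h1, h2]
    have hT : ∀ v, v ∈ Sᶜ ↔ ψ v ∈ Sᶜ := by
      rintro (_ | ⟨k, b⟩)
      · simp [hψ]
      · by_cases h1 : k = i.1
        · subst h1
          rw [hψi b]
          exact iff_of_true (hmemw i b) (hmemw j (σ b))
        · by_cases h2 : k = j.1
          · subst h2
            rw [hψj b]
            exact iff_of_true (hmemw j b) (hmemw i (σ b))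
          · rw [hψfix k b h1 h2]
    refine ⟨restrictAuto ψ Sᶜ hT, ?_, ?_⟩
    · rintro ⟨(_ | ⟨k, b⟩), hx⟩
      · exact fval _ _ (by simp [hψ])
      · by_cases h1 : k = i.1
        · subst h1
          exact (fval _ (w j (σ b)) (by rw [restrictAuto_apply, hψi b, hwval])).trans
            (((hmain b).1).trans (fval (w i b) _ (hwval i b)))
        · by_cases h2 : k = j.1
          · subst h2
            exact (fval _ (w i (σ b)) (by rw [restrictAuto_apply, hψj b, hwval])).trans
              (((hmain b).2).trans (fval (w j b) _ (hwval j b)))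
          · exact fval _ _ (by rw [restrictAuto_apply]; exact hψfix k b h1 h2)
    · refine ⟨w i 0, fun h => ?_⟩
      have := congrArg Subtype.val h
      rw [restrictAuto_apply, hwval, hψi 0] at this
      simp only [Option.some.injEq, Prod.mk.injEq] at this
      exact hij' this.1.symm

def oth (a : Fin 2) : Fin 2 := if a = 0 then 1 else 0

lemma oth_ne (a : Fin 2) : oth a ≠ a := by fin_cases a <;> decide

lemma eq_oth_of_ne {a b : Fin 2} (h : b ≠ a) : b = oth a := by
  fin_cases a <;> fin_cases b <;> simp_all <;> rfl

lemma oth_oth (a : Fin 2) : oth (oth a) = a := by fin_cases a <;> decide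

/-- the label of leaf `a` given a pair -/
def pc {c : ℕ} (x : Fin c × Fin c) (a : Fin 2) : Fin c := if a = 0 then x.1 else x.2

lemma pair_rigid {c : ℕ} (x y : Fin c × Fin c) (hx : x.1 < x.2) (hy : y.1 < y.2)
    (a b : Fin 2) (h1 : pc y b = pc x a) (h2 : pc y (oth b) = pc x (oth a)) :
    y = x ∧ b = a := by
  fin_cases a <;> fin_cases b <;> simp [pc, oth] at h1 h2 ⊢
  · exact Prod.ext h1 h2
  · exact absurd (h1 ▸ h2 ▸ hx) (lt_asymm hy)
  · exact absurd (h1 ▸ h2 ▸ hy) (lt_asymm hx)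
  · exact Prod.ext h2 h1

lemma induce_adj' {V : Type*} (G : SimpleGraph V) (T : Set V) (x y : T) :
    (G.induce T).Adj x y ↔ G.Adj x y := Iff.rfl

lemma upper_center (n c : ℕ) (hc : 0 < c) (S : Set (Option (Fin n × Fin 2)))
    (hS0 : (none : Option (Fin n × Fin 2)) ∉ S)
    (p : Fin n → Fin c × Fin c)
    (hp1 : ∀ i, some (i,(0:Fin 2)) ∉ S → some (i,(1:Fin 2)) ∉ S → (p i).1 < (p i).2)
    (hp2 : ∀ i j, some (i,(0:Fin 2)) ∉ S → some (i,(1:Fin 2)) ∉ S →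
      some (j,(0:Fin 2)) ∉ S → some (j,(1:Fin 2)) ∉ S → p i = p j → i = j)
    (q : Fin n → Fin c)
    (hq : ∀ i j a b, ¬(some (i,(0:Fin 2)) ∉ S ∧ some (i,(1:Fin 2)) ∉ S) →
      ¬(some (j,(0:Fin 2)) ∉ S ∧ some (j,(1:Fin 2)) ∉ S) →
      some (i,a) ∉ S → some (j,b) ∉ S → q i = q j → i = j)
    (hbig : ∃ (i j : Fin n) (a b : Fin 2), i ≠ j ∧ some (i,a) ∉ S ∧ some (j,b) ∉ S) :
    distNum ((friendshipGraph n).induce Sᶜ) ≤ c := by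
  classical
  set A : Fin n → Prop := fun i => some (i,(0:Fin 2)) ∉ S ∧ some (i,(1:Fin 2)) ∉ S with hA
  set f : (Sᶜ : Set _) → Fin c := fun x =>
    Option.rec ⟨0, hc⟩ (fun y => if A y.1 then pc (p y.1) y.2 else q y.1) x.1 with hf
  apply distNum_le _ f
  intro φ hφ
  have hfA : ∀ (i : Fin n) (a : Fin 2) (h : some (i,a) ∈ Sᶜ), A i →
      f ⟨some (i,a), h⟩ = pc (p i) a := by
    intro i a h hAi
    show (if A i then pc (p i) a else q i) = pc (p i) a
    exact if_pos hAi
  have hfB : ∀ (i : Fin n) (a : Fin 2) (h : some (i,a) ∈ Sᶜ), ¬ A i →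
      f ⟨some (i,a), h⟩ = q i := by
    intro i a h hAi
    show (if A i then pc (p i) a else q i) = q i
    exact if_neg hAi
  set c0 : (Sᶜ : Set _) := ⟨none, hS0⟩ with hc0
  have hcenter : φ c0 = c0 := by
    obtain ⟨i0, j0, a0, b0, hij0, hi0, hj0⟩ := hbig
    by_contra hne
    rcases hval : (φ c0 : Option (Fin n × Fin 2)) with _ | ⟨i, a⟩
    · exact hne (Subtype.ext hval)
    obtain ⟨j, b, hjne, hjS⟩ : ∃ (j : Fin n) (b : Fin 2), j ≠ i ∧ some (j,b) ∉ S := by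
      by_cases h : i0 = i
      · exact ⟨j0, b0, fun hji => hij0 (h.trans hji.symm), hj0⟩
      · exact ⟨i0, a0, h, hi0⟩
    set wv : (Sᶜ : Set _) := ⟨some (j,b), hjS⟩ with hwv
    have hwne : φ.symm wv ≠ c0 := by
      intro h
      have h2 : wv = φ c0 := by rw [← φ.apply_symm_apply wv, h]
      have h3 := congrArg Subtype.val h2
      rw [hval] at h3
      simp only [hwv, Option.some.injEq, Prod.mk.injEq] at h3
      exact hjne h3.1
    rcases hval2 : (φ.symm wv : Option (Fin n × Fin 2)) with _ | ⟨k, e⟩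
    · exact hwne (Subtype.ext hval2)
    have hadj : ((friendshipGraph n).induce Sᶜ).Adj c0 (φ.symm wv) := by
      show (friendshipGraph n).Adj ↑c0 ↑(φ.symm wv)
      rw [hval2]
      exact fg_adj_none_some n (k, e)
    have hadj2 := φ.map_adj_iff.mpr hadj
    rw [φ.apply_symm_apply] at hadj2
    have hadj3 : (friendshipGraph n).Adj ↑(φ c0) ↑wv := hadj2
    rw [hval] at hadj3
    have := (fg_adj_some_some n i j a b).mp hadj3
    exact hjne this.1.symm
  rintro ⟨(_ | ⟨i, a⟩), hx⟩
  · have hxc : (⟨none, hx⟩ : (Sᶜ : Set _)) = c0 := Subtype.ext rfl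
    rw [hxc]; exact hcenter
  · set x : (Sᶜ : Set _) := ⟨some (i,a), hx⟩ with hxd
    have hφxc : φ x ≠ c0 := by
      intro h
      have := φ.injective (h.trans hcenter.symm)
      exact absurd (congrArg Subtype.val this) (by simp [hxd, hc0])
    rcases hvx : (φ x : Option (Fin n × Fin 2)) with _ | ⟨j, b⟩
    · exact absurd (Subtype.ext hvx) hφxc
    have m1 : some (j,b) ∈ Sᶜ := hvx ▸ (φ x).2
    have hφx : φ x = ⟨some (j,b), m1⟩ := Subtype.ext hvx
    by_cases hAi : A i
    · have ht : some (i, oth a) ∈ Sᶜ := by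
        rcases (show a = 0 ∨ a = 1 by omega) with rfl | rfl
        · simpa [oth] using hAi.2
        · simpa [oth] using hAi.1
      set t : (Sᶜ : Set _) := ⟨some (i, oth a), ht⟩ with htd
      have hadj : ((friendshipGraph n).induce Sᶜ).Adj x t := by
        show (friendshipGraph n).Adj (some (i,a)) (some (i, oth a))
        exact (fg_adj_some_some n i i a (oth a)).mpr ⟨rfl, Ne.symm (oth_ne a)⟩
      have hadj2 := φ.map_adj_iff.mpr hadj
      have hφtc : φ t ≠ c0 := by
        intro h
        have := φ.injective (h.trans hcenter.symm)
        exact absurd (congrArg Subtype.val this) (by simp [htd, hc0])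
      rcases hvt : (φ t : Option (Fin n × Fin 2)) with _ | ⟨j', b'⟩
      · exact absurd (Subtype.ext hvt) hφtc
      have m2 : some (j',b') ∈ Sᶜ := hvt ▸ (φ t).2
      have hφt : φ t = ⟨some (j',b'), m2⟩ := Subtype.ext hvt
      have hadjv : (friendshipGraph n).Adj ↑(φ x) ↑(φ t) := hadj2
      rw [hvx, hvt] at hadjv
      obtain ⟨hjj, hbb⟩ := (fg_adj_some_some n j j' b b').mp hadjv
      have hb' : b' = oth b := eq_oth_of_ne (Ne.symm hbb)
      have m2' : some (j, oth b) ∈ Sᶜ := by rw [hjj, ← hb']; exact m2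
      have hAj : A j := by
        rcases (show b = 0 ∨ b = 1 by omega) with rfl | rfl
        · exact ⟨m1, by simpa [oth] using m2'⟩
        · exact ⟨by simpa [oth] using m2', m1⟩
      have e1 : pc (p j) b = pc (p i) a := by
        have h := hφ x
        rwa [hφx, hfA j b m1 hAj, hfA i a hx hAi] at h
      have e2 : pc (p j) (oth b) = pc (p i) (oth a) := by
        have h := hφ t
        rw [hφt, hfA j' b' m2 (hjj ▸ hAj), hfA i (oth a) ht hAi] at h
        rwa [← hjj, hb'] at h
      obtain ⟨hpe, hbe⟩ := pair_rigid (p i) (p j) (hp1 i hAi.1 hAi.2) (hp1 j hAj.1 hAj.2)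
        a b e1 e2
      have hji : j = i := hp2 j i hAj.1 hAj.2 hAi.1 hAi.2 hpe
      exact Subtype.ext (by rw [hvx, hji, hbe])
    · have htwS : some (i, oth a) ∈ S := by
        by_contra h
        apply hAi
        rcases (show a = 0 ∨ a = 1 by omega) with rfl | rfl
        · exact ⟨hx, by simpa [oth] using h⟩
        · exact ⟨by simpa [oth] using h, hx⟩
      have hAj : ¬ A j := by
        intro hAj
        have hu : some (j, oth b) ∈ Sᶜ := by
          rcases (show b = 0 ∨ b = 1 by omega) with rfl | rfl
          · simpa [oth] using hAj.2
          · simpa [oth] using hAj.1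
        set u : (Sᶜ : Set _) := ⟨some (j, oth b), hu⟩ with hud
        have hadj : ((friendshipGraph n).induce Sᶜ).Adj (φ x) u := by
          show (friendshipGraph n).Adj ↑(φ x) ↑u
          rw [hvx]
          exact (fg_adj_some_some n j j b (oth b)).mpr ⟨rfl, Ne.symm (oth_ne b)⟩
        have hadj2 : ((friendshipGraph n).induce Sᶜ).Adj x (φ.symm u) := by
          rw [← φ.apply_symm_apply u] at hadj
          exact φ.map_adj_iff.mp hadj
        rcases hvu : (φ.symm u : Option (Fin n × Fin 2)) with _ | ⟨k, e⟩
        · have h1 : φ.symm u = c0 := Subtype.ext hvu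
          have h2 : u = φ c0 := by
            rw [← φ.apply_symm_apply u, h1]
          exact absurd (congrArg Subtype.val (h2.trans hcenter)) (by simp [hud, hc0])
        · have hadjv : (friendshipGraph n).Adj ↑x ↑(φ.symm u) := hadj2
          rw [hvu] at hadjv
          obtain ⟨hki, hea⟩ := (fg_adj_some_some n i k a e).mp hadjv
          have he : e = oth a := eq_oth_of_ne (Ne.symm hea)
          have : some (i, oth a) ∈ Sᶜ := by rw [hki, ← he]; exact hvu ▸ (φ.symm u).2
          exact this htwS
      have e1 : q j = q i := by
        have h := hφ x
        rwa [hφx, hfB j b m1 hAj, hfB i a hx hAi] at h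
      have hji : j = i := hq j i b a hAj hAi m1 hx e1
      have hba : b = a := by
        by_contra h
        have : some (i, oth a) ∈ Sᶜ := by rw [← hji, ← eq_oth_of_ne h]; exact m1

        exact this htwS
      exact Subtype.ext (by rw [hvx, hji, hba])

lemma upper_matching (n c : ℕ) (hc : 0 < c) (S : Set (Option (Fin n × Fin 2)))
    (hS0 : (none : Option (Fin n × Fin 2)) ∈ S)
    (p : Fin n → Fin c × Fin c)
    (hp1 : ∀ i, some (i,(0:Fin 2)) ∉ S → some (i,(1:Fin 2)) ∉ S → (p i).1 < (p i).2)
    (hp2 : ∀ i j, some (i,(0:Fin 2)) ∉ S → some (i,(1:Fin 2)) ∉ S →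
      some (j,(0:Fin 2)) ∉ S → some (j,(1:Fin 2)) ∉ S → p i = p j → i = j)
    (q : Fin n → Fin c)
    (hq : ∀ i j a b, ¬(some (i,(0:Fin 2)) ∉ S ∧ some (i,(1:Fin 2)) ∉ S) →
      ¬(some (j,(0:Fin 2)) ∉ S ∧ some (j,(1:Fin 2)) ∉ S) →
      some (i,a) ∉ S → some (j,b) ∉ S → q i = q j → i = j) :
    distNum ((friendshipGraph n).induce Sᶜ) ≤ c := by
  classical
  set A : Fin n → Prop := fun i => some (i,(0:Fin 2)) ∉ S ∧ some (i,(1:Fin 2)) ∉ S with hA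
  set f : (Sᶜ : Set _) → Fin c := fun x =>
    Option.rec ⟨0, hc⟩ (fun y => if A y.1 then pc (p y.1) y.2 else q y.1) x.1 with hf
  apply distNum_le _ f
  intro φ hφ
  have hfA : ∀ (i : Fin n) (a : Fin 2) (h : some (i,a) ∈ Sᶜ), A i →
      f ⟨some (i,a), h⟩ = pc (p i) a := by
    intro i a h hAi
    show (if A i then pc (p i) a else q i) = pc (p i) a
    exact if_pos hAi
  have hfB : ∀ (i : Fin n) (a : Fin 2) (h : some (i,a) ∈ Sᶜ), ¬ A i →
      f ⟨some (i,a), h⟩ = q i := by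
    intro i a h hAi
    show (if A i then pc (p i) a else q i) = q i
    exact if_neg hAi
  have hnone : ∀ y : (Sᶜ : Set _), (y : Option (Fin n × Fin 2)) ≠ none := by
    rintro ⟨(_ | z), hy⟩ h
    · exact hy hS0
    · exact Option.some_ne_none z h
  rintro ⟨(_ | ⟨i, a⟩), hx⟩
  · exact absurd hS0 hx
  · set x : (Sᶜ : Set _) := ⟨some (i,a), hx⟩ with hxd
    rcases hvx : (φ x : Option (Fin n × Fin 2)) with _ | ⟨j, b⟩
    · exact absurd hvx (hnone _)
    have m1 : some (j,b) ∈ Sᶜ := hvx ▸ (φ x).2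
    have hφx : φ x = ⟨some (j,b), m1⟩ := Subtype.ext hvx
    by_cases hAi : A i
    · have ht : some (i, oth a) ∈ Sᶜ := by
        rcases (show a = 0 ∨ a = 1 by omega) with rfl | rfl
        · simpa [oth] using hAi.2
        · simpa [oth] using hAi.1
      set t : (Sᶜ : Set _) := ⟨some (i, oth a), ht⟩ with htd
      have hadj : ((friendshipGraph n).induce Sᶜ).Adj x t := by
        show (friendshipGraph n).Adj (some (i,a)) (some (i, oth a))
        exact (fg_adj_some_some n i i a (oth a)).mpr ⟨rfl, Ne.symm (oth_ne a)⟩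
      have hadj2 := φ.map_adj_iff.mpr hadj
      rcases hvt : (φ t : Option (Fin n × Fin 2)) with _ | ⟨j', b'⟩
      · exact absurd hvt (hnone _)
      have m2 : some (j',b') ∈ Sᶜ := hvt ▸ (φ t).2
      have hφt : φ t = ⟨some (j',b'), m2⟩ := Subtype.ext hvt
      have hadjv : (friendshipGraph n).Adj ↑(φ x) ↑(φ t) := hadj2
      rw [hvx, hvt] at hadjv
      obtain ⟨hjj, hbb⟩ := (fg_adj_some_some n j j' b b').mp hadjv
      have hb' : b' = oth b := eq_oth_of_ne (Ne.symm hbb)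
      have m2' : some (j, oth b) ∈ Sᶜ := by rw [hjj, ← hb']; exact m2
      have hAj : A j := by
        rcases (show b = 0 ∨ b = 1 by omega) with rfl | rfl
        · exact ⟨m1, by simpa [oth] using m2'⟩
        · exact ⟨by simpa [oth] using m2', m1⟩
      have e1 : pc (p j) b = pc (p i) a := by
        have h := hφ x
        rwa [hφx, hfA j b m1 hAj, hfA i a hx hAi] at h
      have e2 : pc (p j) (oth b) = pc (p i) (oth a) := by
        have h := hφ t
        rw [hφt, hfA j' b' m2 (hjj ▸ hAj), hfA i (oth a) ht hAi] at h
        rwa [← hjj, hb'] at h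
      obtain ⟨hpe, hbe⟩ := pair_rigid (p i) (p j) (hp1 i hAi.1 hAi.2) (hp1 j hAj.1 hAj.2)
        a b e1 e2
      have hji : j = i := hp2 j i hAj.1 hAj.2 hAi.1 hAi.2 hpe
      exact Subtype.ext (by rw [hvx, hji, hbe])
    · have htwS : some (i, oth a) ∈ S := by
        by_contra h
        apply hAi
        rcases (show a = 0 ∨ a = 1 by omega) with rfl | rfl
        · exact ⟨hx, by simpa [oth] using h⟩
        · exact ⟨by simpa [oth] using h, hx⟩
      have hAj : ¬ A j := by
        intro hAj
        have hu : some (j, oth b) ∈ Sᶜ := by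
          rcases (show b = 0 ∨ b = 1 by omega) with rfl | rfl
          · simpa [oth] using hAj.2
          · simpa [oth] using hAj.1
        set u : (Sᶜ : Set _) := ⟨some (j, oth b), hu⟩ with hud
        have hadj : ((friendshipGraph n).induce Sᶜ).Adj (φ x) u := by
          show (friendshipGraph n).Adj ↑(φ x) ↑u
          rw [hvx]
          exact (fg_adj_some_some n j j b (oth b)).mpr ⟨rfl, Ne.symm (oth_ne b)⟩
        have hadj2 : ((friendshipGraph n).induce Sᶜ).Adj x (φ.symm u) := by
          rw [← φ.apply_symm_apply u] at hadj
          exact φ.map_adj_iff.mp hadj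
        rcases hvu : (φ.symm u : Option (Fin n × Fin 2)) with _ | ⟨k, e⟩
        · exact absurd hvu (hnone _)
        · have hadjv : (friendshipGraph n).Adj ↑x ↑(φ.symm u) := hadj2
          rw [hvu] at hadjv
          obtain ⟨hki, hea⟩ := (fg_adj_some_some n i k a e).mp hadjv
          have he : e = oth a := eq_oth_of_ne (Ne.symm hea)
          have : some (i, oth a) ∈ Sᶜ := by rw [hki, ← he]; exact hvu ▸ (φ.symm u).2
          exact this htwS
      have e1 : q j = q i := by
        have h := hφ x
        rwa [hφx, hfB j b m1 hAj, hfB i a hx hAi] at h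
      have hji : j = i := hq j i b a hAj hAi m1 hx e1
      have hba : b = a := by
        by_contra h
        have : some (i, oth a) ∈ Sᶜ := by rw [← hji, ← eq_oth_of_ne h]; exact m1
        exact this htwS
      exact Subtype.ext (by rw [hvx, hji, hba])

lemma distNum_transfer {V W : Type*} {G : SimpleGraph V} {G' : SimpleGraph W} (e : G ≃g G')
    (d : ℕ) (h : ∃ f : V → Fin d, ∀ φ : G ≃g G, (∀ x, f (φ x) = f x) → ∀ x, φ x = x) :
    ∃ f : W → Fin d, ∀ φ : G' ≃g G', (∀ x, f (φ x) = f x) → ∀ x, φ x = x := by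
  obtain ⟨f, hf⟩ := h
  refine ⟨f ∘ e.symm, fun φ hφ y => ?_⟩
  have key : ∀ x, ((e.trans φ).trans e.symm) x = x := by
    apply hf
    intro x
    have h1 := hφ (e x)
    simp only [Function.comp_apply, e.symm_apply_apply] at h1
    simpa [RelIso.trans_apply] using h1
  have := key (e.symm y)
  simp only [RelIso.trans_apply] at this
  have h2 : φ (e (e.symm y)) = e (e.symm y) := by
    have := congrArg e this
    rwa [e.apply_symm_apply] at this
  rwa [e.apply_symm_apply] at h2

lemma distNum_congr {V W : Type*} {G : SimpleGraph V} {G' : SimpleGraph W} (e : G ≃g G') :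
    distNum G = distNum G' := by
  unfold distNum
  congr 1
  ext d
  exact ⟨distNum_transfer e d, distNum_transfer e.symm d⟩

lemma two_mul_choose_two (m : ℕ) : 2 * m.choose 2 = m * (m - 1) := by
  rw [Nat.choose_two_right, ← Finset.sum_range_id, mul_comm]
  exact Finset.sum_range_id_mul_two m

lemma choose_two_succ (m : ℕ) : (m + 1).choose 2 = m.choose 2 + m := by
  have h := Nat.choose_succ_succ m 1
  norm_num at h
  omega

open Classical in
/-- the full-triangle finset -/
noncomputable def AF (n : ℕ) (S : Set (Option (Fin n × Fin 2))) : Finset (Fin n) :=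
  Finset.univ.filter (fun i => some (i,(0:Fin 2)) ∉ S ∧ some (i,(1:Fin 2)) ∉ S)

open Classical in
/-- the half-triangle finset -/
noncomputable def BF (n : ℕ) (S : Set (Option (Fin n × Fin 2))) : Finset (Fin n) :=
  Finset.univ.filter (fun i => ¬(some (i,(0:Fin 2)) ∉ S ∧ some (i,(1:Fin 2)) ∉ S) ∧
    (some (i,(0:Fin 2)) ∉ S ∨ some (i,(1:Fin 2)) ∉ S))

lemma mem_AF {n : ℕ} {S : Set (Option (Fin n × Fin 2))} {i : Fin n} :
    i ∈ AF n S ↔ some (i,(0:Fin 2)) ∉ S ∧ some (i,(1:Fin 2)) ∉ S := by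
  simp [AF]

lemma mem_BF {n : ℕ} {S : Set (Option (Fin n × Fin 2))} {i : Fin n} :
    i ∈ BF n S ↔ ¬(some (i,(0:Fin 2)) ∉ S ∧ some (i,(1:Fin 2)) ∉ S) ∧
      (some (i,(0:Fin 2)) ∉ S ∨ some (i,(1:Fin 2)) ∉ S) := by
  simp only [BF, Finset.mem_filter, Finset.mem_univ, true_and]

lemma distNum_le_main (n c : ℕ) (hc : 2 ≤ c) (S : Set (Option (Fin n × Fin 2)))
    (hA : (AF n S).card ≤ c.choose 2) (hB : (BF n S).card ≤ c)
    (hbig : ((none : Option (Fin n × Fin 2)) ∈ S) ∨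
       ((none : Option (Fin n × Fin 2)) ∉ S ∧
         ∃ (i j : Fin n) (a b : Fin 2), i ≠ j ∧ some (i,a) ∉ S ∧ some (j,b) ∉ S)) :
    distNum ((friendshipGraph n).induce Sᶜ) ≤ c := by
  classical
  have hone : (0:ℕ) < c := by omega
  have hnsp : Nonempty (SortedPairs c) :=
    ⟨⟨(⟨0, by omega⟩, ⟨1, by omega⟩), by simp [Fin.lt_def]⟩⟩
  obtain ⟨g, hg⟩ := exists_injOn_finset (AF n S) (SortedPairs c)
    (by rw [card_sortedPairs]; exact hA)
  have hfc : Nonempty (Fin c) := ⟨⟨0, hone⟩⟩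
  obtain ⟨q, hq⟩ := exists_injOn_finset (BF n S) (Fin c)
    (by rwa [Fintype.card_fin])
  set p : Fin n → Fin c × Fin c := fun i => (g i).1 with hp
  have hp1 : ∀ i, some (i,(0:Fin 2)) ∉ S → some (i,(1:Fin 2)) ∉ S → (p i).1 < (p i).2 :=
    fun i _ _ => (g i).2
  have hp2 : ∀ i j, some (i,(0:Fin 2)) ∉ S → some (i,(1:Fin 2)) ∉ S →
      some (j,(0:Fin 2)) ∉ S → some (j,(1:Fin 2)) ∉ S → p i = p j → i = j := by
    intro i j hi0 hi1 hj0 hj1 hpij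
    exact hg i (mem_AF.mpr ⟨hi0, hi1⟩) j (mem_AF.mpr ⟨hj0, hj1⟩) (Subtype.ext hpij)
  have hq2 : ∀ i j a b, ¬(some (i,(0:Fin 2)) ∉ S ∧ some (i,(1:Fin 2)) ∉ S) →
      ¬(some (j,(0:Fin 2)) ∉ S ∧ some (j,(1:Fin 2)) ∉ S) →
      some (i,a) ∉ S → some (j,b) ∉ S → q i = q j → i = j := by
    intro i j a b hi hj hia hjb
    refine hq i ?_ j ?_
    · refine mem_BF.mpr ⟨hi, ?_⟩
      rcases (show a = 0 ∨ a = 1 by omega) with rfl | rfl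
      exacts [Or.inl hia, Or.inr hia]
    · refine mem_BF.mpr ⟨hj, ?_⟩
      rcases (show b = 0 ∨ b = 1 by omega) with rfl | rfl
      exacts [Or.inl hjb, Or.inr hjb]
  rcases hbig with h | ⟨h0, hbig'⟩
  · exact upper_matching n c hone S h p hp1 hp2 q hq2
  · exact upper_center n c hone S h0 p hp1 hp2 q hq2 hbig'

lemma distNum_lower_main (n c : ℕ) (S : Set (Option (Fin n × Fin 2)))
    (hA : c.choose 2 < (AF n S).card) :
    c < distNum ((friendshipGraph n).induce Sᶜ) :=
  lower_core n c S (AF n S) (fun i hi => mem_AF.mp hi) hA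

open Classical in
lemma count_key (n : ℕ) (S : Set (Option (Fin n × Fin 2))) :
    ∃ t : ℕ, t + (if (none : Option (Fin n × Fin 2)) ∈ S then 1 else 0) = S.ncard ∧
      n ≤ (AF n S).card + t ∧ (BF n S).card ≤ t := by
  classical
  have hS : S.Finite := Set.toFinite S
  set F := hS.toFinset with hF
  set RL := F.filter (fun v => ¬ v = none) with hRL
  have hm : ∀ i : Fin n, i ∉ AF n S →
      ∃ b : Fin 2, some (i, b) ∈ RL ∧ (if some (i,(0:Fin 2)) ∈ S then some (i,(0:Fin 2))
        else some (i,(1:Fin 2))) = some (i,b) := by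
    intro i hi
    by_cases h0 : some (i,(0:Fin 2)) ∈ S
    · refine ⟨0, ?_, if_pos h0⟩
      exact Finset.mem_filter.mpr ⟨(Set.Finite.mem_toFinset hS).mpr h0, by simp⟩
    · have h1 : some (i,(1:Fin 2)) ∈ S := by
        by_contra h1
        exact hi (mem_AF.mpr ⟨h0, h1⟩)
      refine ⟨1, ?_, if_neg h0⟩
      exact Finset.mem_filter.mpr ⟨(Set.Finite.mem_toFinset hS).mpr h1, by simp⟩
  have hsd : (Finset.univ \ AF n S).card ≤ RL.card := by
    apply Finset.card_le_card_of_injOn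
      (fun i => if some (i,(0:Fin 2)) ∈ S then some (i,(0:Fin 2)) else some (i,(1:Fin 2)))
    · intro i hi
      obtain ⟨b, hb1, hb2⟩ := hm i (Finset.mem_sdiff.mp hi).2
      beta_reduce; rw [hb2]; exact hb1
    · intro i hi j hj hij
      simp only [Finset.mem_coe] at hi hj
      obtain ⟨b, _, hb2⟩ := hm i (Finset.mem_sdiff.mp hi).2
      obtain ⟨b', _, hb2'⟩ := hm j (Finset.mem_sdiff.mp hj).2
      have hij' : (if some (i,(0:Fin 2)) ∈ S then some (i,(0:Fin 2)) else some (i,(1:Fin 2)))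
          = (if some (j,(0:Fin 2)) ∈ S then some (j,(0:Fin 2)) else some (j,(1:Fin 2))) := hij
      rw [hb2, hb2'] at hij'
      exact congrArg Prod.fst (Option.some_injective _ hij')
  refine ⟨RL.card, ?_, ?_, ?_⟩
  · have h1 : S.ncard = F.card := Set.ncard_eq_toFinset_card S hS
    have h2 := Finset.card_filter_add_card_filter_not
      (s := F) (p := fun v => v = none)
    rw [← hRL] at h2
    have h3 : (F.filter (fun v => v = none)).card =
        if (none : Option (Fin n × Fin 2)) ∈ S then 1 else 0 := by
      by_cases h : (none : Option (Fin n × Fin 2)) ∈ S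
      · rw [if_pos h]
        have : F.filter (fun v => v = none) = {none} := by
          ext v
          simp [hF, Set.Finite.mem_toFinset]
          rintro rfl
          exact h
        rw [this, Finset.card_singleton]
      · rw [if_neg h]
        rw [Finset.card_eq_zero, Finset.filter_eq_empty_iff]
        rintro v hv rfl
        exact h (by simpa [hF, Set.Finite.mem_toFinset] using hv)
    omega
  · have h4 : (Finset.univ \ AF n S).card = n - (AF n S).card := by
      rw [Finset.card_sdiff_of_subset (Finset.subset_univ _), Finset.card_univ, Fintype.card_fin]
    have h5 : (AF n S).card ≤ n := by
      simpa using Finset.card_le_univ (AF n S)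
    omega
  · refine le_trans (Finset.card_le_card ?_) hsd
    intro i hi
    rw [Finset.mem_sdiff]
    exact ⟨Finset.mem_univ i, fun h => (mem_BF.mp hi).1 (mem_AF.mp h)⟩

lemma card_filter_val_lt (n r : ℕ) (h : r ≤ n) :
    (Finset.univ.filter (fun i : Fin n => i.val < r)).card = r := by
  have h1 := Fintype.card_subtype (p := fun i : Fin n => i.val < r)
  have e : {i : Fin n // i.val < r} ≃ Fin r :=
    ⟨fun i => ⟨i.1.val, i.2⟩, fun t => ⟨⟨t.val, lt_of_lt_of_le t.isLt h⟩, t.isLt⟩,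
      fun i => by ext; rfl, fun t => by ext; rfl⟩
  have h2 := Fintype.card_congr e
  rw [Fintype.card_fin] at h2
  omega

lemma choose_two_lower (m : ℕ) : m - 1 ≤ m.choose 2 := by
  rcases Nat.eq_zero_or_pos m with rfl | hm
  · simp
  · have h := choose_two_succ (m - 1)
    rw [show m - 1 + 1 = m by omega] at h
    omega

lemma distNum_fg (n d : ℕ) (hn : 2 ≤ n) (hd1 : n ≤ d.choose 2)
    (hd2 : (d-1).choose 2 < n) (hd3 : 3 ≤ d) :
    distNum (friendshipGraph n) = d := by
  have hAF : AF n (∅ : Set (Option (Fin n × Fin 2))) = Finset.univ := by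
    ext i; simp [mem_AF]
  have hBF : BF n (∅ : Set (Option (Fin n × Fin 2))) = ∅ := by
    ext i; simp [mem_BF]
  have htrans : distNum ((friendshipGraph n).induce (∅ : Set _)ᶜ) =
      distNum (friendshipGraph n) := by
    rw [Set.compl_empty]
    exact distNum_congr (induceUnivIso _)
  have hup : distNum ((friendshipGraph n).induce (∅ : Set _)ᶜ) ≤ d := by
    apply distNum_le_main n d (by omega)
    · rw [hAF, Finset.card_univ, Fintype.card_fin]; exact hd1
    · rw [hBF, Finset.card_empty]; omega
    · refine Or.inr ⟨by simp, ⟨0, by omega⟩, ⟨1, by omega⟩, 0, 0, ?_, by simp, by simp⟩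
      simp [Fin.ext_iff]
  have hlo : d - 1 < distNum ((friendshipGraph n).induce (∅ : Set _)ᶜ) := by
    apply distNum_lower_main
    rw [hAF, Finset.card_univ, Fintype.card_fin]; exact hd2
  rw [← htrans]
  omega

lemma stable (n d : ℕ) (hn : 2 ≤ n) (hd1 : n ≤ d.choose 2)
    (hd2 : (d-1).choose 2 < n) (hd3 : 3 ≤ d) (S : Set (Option (Fin n × Fin 2)))
    (hkr : S.ncard < n - (d-1).choose 2) :
    distNum ((friendshipGraph n).induce Sᶜ) = d := by
  classical
  obtain ⟨t, ht1, ht2, ht3⟩ := count_key n S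
  have hAn : (AF n S).card ≤ n := by simpa using Finset.card_le_univ (AF n S)
  have hcs : d.choose 2 = (d-1).choose 2 + (d-1) := by
    have h := choose_two_succ (d-1)
    rw [show d - 1 + 1 = d by omega] at h
    omega
  have ht : t < n - (d-1).choose 2 := by
    by_cases h : (none : Option (Fin n × Fin 2)) ∈ S <;> simp [h] at ht1 <;> omega
  have hlow : (d-1).choose 2 < (AF n S).card := by omega
  have hup : distNum ((friendshipGraph n).induce Sᶜ) ≤ d := by
    apply distNum_le_main n d (by omega)
    · omega
    · omega
    · by_cases h : (none : Option (Fin n × Fin 2)) ∈ S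
      · exact Or.inl h
      · refine Or.inr ⟨h, ?_⟩
        have h2 : 1 < (AF n S).card := by
          have := choose_two_lower (d-1)
          omega
        obtain ⟨i, hi, j, hj, hij⟩ := Finset.one_lt_card.mp h2
        exact ⟨i, j, 0, 0, hij, (mem_AF.mp hi).1, (mem_AF.mp hj).1⟩
  have hlo : d - 1 < distNum ((friendshipGraph n).induce Sᶜ) :=
    distNum_lower_main n (d-1) S hlow
  omega

lemma witness (n d : ℕ) (hn : 2 ≤ n) (hd1 : n ≤ d.choose 2)
    (hd2 : (d-1).choose 2 < n) (hd3 : 3 ≤ d) :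
    ∃ S : Set (Option (Fin n × Fin 2)), S ≠ Set.univ ∧
      S.ncard = n - (d-1).choose 2 ∧
      distNum ((friendshipGraph n).induce Sᶜ) = d - 1 := by
  classical
  set r := n - (d-1).choose 2 with hr
  have hcs : d.choose 2 = (d-1).choose 2 + (d-1) := by
    have h := choose_two_succ (d-1)
    rw [show d - 1 + 1 = d by omega] at h
    omega
  have hcs2 : (d-1).choose 2 = (d-2).choose 2 + (d-2) := by
    have h := choose_two_succ (d-2)
    rw [show d - 2 + 1 = d - 1 by omega] at h
    omega
  have hctl : d - 2 ≤ (d-1).choose 2 := by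
    have := choose_two_lower (d-1)
    omega
  have hr1 : 1 ≤ r := by omega
  have hrd : r ≤ d - 1 := by omega
  have hrn : r < n := by omega
  set Sw : Finset (Option (Fin n × Fin 2)) :=
    (Finset.univ.filter (fun i : Fin n => i.val < r)).image
      (fun i => some (i, (1:Fin 2))) with hSw
  have hmemS : ∀ v : Option (Fin n × Fin 2),
      v ∈ (↑Sw : Set (Option (Fin n × Fin 2))) ↔
        ∃ i : Fin n, i.val < r ∧ v = some (i, (1:Fin 2)) := by
    intro v
    simp only [hSw, Finset.mem_coe, Finset.mem_image, Finset.mem_filter, Finset.mem_univ,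
      true_and]
    constructor
    · rintro ⟨i, hi, rfl⟩; exact ⟨i, hi, rfl⟩
    · rintro ⟨i, hi, rfl⟩; exact ⟨i, hi, rfl⟩
  have hnone : (none : Option (Fin n × Fin 2)) ∉ (↑Sw : Set (Option (Fin n × Fin 2))) := by
    rw [hmemS]; rintro ⟨i, -, h⟩; exact Option.some_ne_none _ h.symm
  have hmem0 : ∀ (i : Fin n) (hi : True), some (i, (0:Fin 2)) ∉
      (↑Sw : Set (Option (Fin n × Fin 2))) := by
    intro i _
    rw [hmemS]
    rintro ⟨j, -, h⟩
    have := (Prod.mk.injEq _ _ _ _ ▸ Option.some_injective _ h).2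
    simp at this
  have hmem1 : ∀ i : Fin n, (some (i, (1:Fin 2)) ∈
      (↑Sw : Set (Option (Fin n × Fin 2)))) ↔ i.val < r := by
    intro i
    rw [hmemS]
    constructor
    · rintro ⟨j, hj, h⟩
      have := (Prod.mk.injEq _ _ _ _ ▸ Option.some_injective _ h).1
      rwa [this]
    · intro h; exact ⟨i, h, rfl⟩
  have hAF : AF n (↑Sw) = Finset.univ.filter (fun i : Fin n => ¬ i.val < r) := by
    ext i
    rw [mem_AF, Finset.mem_filter]
    simp only [Finset.mem_univ, true_and]
    constructor
    · rintro ⟨-, h1⟩; rwa [hmem1] at h1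
    · intro h; exact ⟨hmem0 i trivial, by rwa [hmem1]⟩
  have hBF : BF n (↑Sw) = Finset.univ.filter (fun i : Fin n => i.val < r) := by
    ext i
    rw [mem_BF, Finset.mem_filter]
    simp only [Finset.mem_univ, true_and]
    constructor
    · rintro ⟨h1, -⟩
      by_contra h
      exact h1 ⟨hmem0 i trivial, by rw [hmem1]; exact h⟩
    · intro h
      refine ⟨fun hc => ?_, Or.inl (hmem0 i trivial)⟩
      rw [hmem1] at hc
      exact hc.2 h
  have hAFcard : (AF n (↑Sw)).card = (d-1).choose 2 := by
    rw [hAF]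
    have := Finset.card_filter_add_card_filter_not
      (s := (Finset.univ : Finset (Fin n))) (p := fun i : Fin n => i.val < r)
    have h2 := card_filter_val_lt n r (le_of_lt hrn)
    have h3 : (Finset.univ : Finset (Fin n)).card = n := by
      rw [Finset.card_univ, Fintype.card_fin]
    omega
  have hBFcard : (BF n (↑Sw)).card = r := by
    rw [hBF]; exact card_filter_val_lt n r (le_of_lt hrn)
  refine ⟨↑Sw, ?_, ?_, ?_⟩
  · intro h
    rw [h] at hnone
    exact hnone (Set.mem_univ _)
  · rw [Set.ncard_coe_finset, hSw, Finset.card_image_of_injective, card_filter_val_lt n r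
      (le_of_lt hrn)]
    intro i j hij
    exact (Prod.mk.injEq _ _ _ _ ▸ Option.some_injective _ hij).1
  · have hup : distNum ((friendshipGraph n).induce (↑Sw : Set _)ᶜ) ≤ d - 1 := by
      apply distNum_le_main n (d-1) (by omega)
      · omega
      · omega
      · refine Or.inr ⟨hnone, ⟨0, by omega⟩, ⟨r, hrn⟩, 0, 0, ?_, hmem0 _ trivial,
          hmem0 _ trivial⟩
        simp only [Fin.ext_iff, ne_eq]
        omega
    have hlo : d - 2 < distNum ((friendshipGraph n).induce (↑Sw : Set _)ᶜ) := by
      apply distNum_lower_main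
      omega
    omega

/-- Distinguishing stability of friendship graphs. -/
theorem stD_friendshipGraph (n : ℕ) (hn : 2 ≤ n) :
    stD (friendshipGraph n) =
      sInf {k : ℕ | 1 ≤ k ∧ ∃ m : ℕ, m * m = 8 * (n - k) + 1} := by
  classical
  have hex : ∃ d : ℕ, n ≤ d.choose 2 := ⟨n+1, by have := choose_two_succ n; omega⟩
  set d := Nat.find hex with hd
  have hd1' := Nat.find_spec hex
  have hdmin := fun m (h : m < d) => Nat.find_min hex (by omega : m < Nat.find hex)
  clear_value d
  have hd1 : n ≤ d.choose 2 := by rw [hd]; exact Nat.find_spec hex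
  have hd3 : 3 ≤ d := by
    by_contra h
    push_neg at h
    have : d.choose 2 ≤ 1 := by interval_cases d <;> decide
    omega
  have hd2 : (d-1).choose 2 < n := by
    have := hdmin (d-1) (by omega)
    omega
  set r := n - (d-1).choose 2 with hr
  have hcs : d.choose 2 = (d-1).choose 2 + (d-1) := by
    have h := choose_two_succ (d-1)
    rw [show d - 1 + 1 = d by omega] at h
    omega
  have hDfg := distNum_fg n d hn hd1 hd2 hd3
  obtain ⟨Sw, hSw1, hSw2, hSw3⟩ := witness n d hn hd1 hd2 hd3
  have hL : stD (friendshipGraph n) = r := by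
    unfold stD
    have hmem : r ∈ {k : ℕ | ∃ S : Set (Option (Fin n × Fin 2)), S ≠ Set.univ ∧
        S.ncard = k ∧
        distNum ((friendshipGraph n).induce Sᶜ) ≠ distNum (friendshipGraph n)} :=
      ⟨Sw, hSw1, hSw2, by rw [hSw3, hDfg]; omega⟩
    refine le_antisymm (Nat.sInf_le hmem) (le_csInf ⟨r, hmem⟩ ?_)
    rintro k ⟨S, hS1, hS2, hS3⟩
    by_contra hlt
    push_neg at hlt
    exact hS3 (by rw [stable n d hn hd1 hd2 hd3 S (by omega), hDfg])
  have hR : sInf {k : ℕ | 1 ≤ k ∧ ∃ m : ℕ, m * m = 8 * (n - k) + 1} = r := by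
    have h2t := two_mul_choose_two (d-1)
    have hmem : r ∈ {k : ℕ | 1 ≤ k ∧ ∃ m : ℕ, m * m = 8 * (n - k) + 1} := by
      refine ⟨by omega, 2*d-3, ?_⟩
      have hnr : n - r = (d-1).choose 2 := by omega
      rw [hnr]
      obtain ⟨u, hu⟩ : ∃ u, d = u + 3 := ⟨d-3, by omega⟩
      subst hu
      rw [show 2*(u+3)-3 = 2*u+3 by omega]
      rw [show u+3-1 = u+2 by omega] at h2t ⊢
      rw [show u+2-1 = u+1 by omega] at h2t
      nlinarith [h2t]
    refine le_antisymm (Nat.sInf_le hmem) (le_csInf ⟨r, hmem⟩ ?_)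
    rintro k ⟨hk1, m, hm⟩
    by_contra hlt
    push_neg at hlt
    rcases Nat.even_or_odd m with ⟨s, hs⟩ | ⟨e, he⟩
    · subst hs
      have hss : (s+s)*(s+s) = 4*(s*s) := by ring
      omega
    · subst he
      have hsq : (2*e+1)*(2*e+1) = 4*(e*e+e)+1 := by ring
      have hch := two_mul_choose_two (e+1)
      rw [show e+1-1 = e by omega] at hch
      have hprod : (e+1)*e = e*e+e := by ring
      have hck : (e+1).choose 2 = n - k := by omega
      have hmono : ¬ (e+1 ≤ d-1) := by
        intro h
        have := Nat.choose_le_choose 2 h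
        omega
      have := Nat.choose_le_choose 2 (show d ≤ e+1 by omega)
      omega
  rw [hL]
  exact hR.symm
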